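/- arXiv:1406.6228 — 5 statements merged into one kernel-verified Lean document; each statement's English description precedes it below -/
import Mathlib

section
/- Consider a k-FAT obstruction H_k with k > 2. If the positions of the pre-drawn intervals of x_k and y_k are swapped, then the resulting configuration contains a 1-FAT obstruction with x'_1 = y_k, y'_1 = x_k, and z'_1 = z_k. Furthermore, if k = 2 and the swapped configuration contains no such 1-FAT obstruction, then x_2 is adjacent to t_2. -/
/-!
Common framework: interval representations, partial representations,
MPQ-tree Q-nodes (abstracted), the left-forcing relation `⊲`, and the
named obstruction configurations from Klavík–Saitoh,
"Minimal obstructions for partial representations of interval graphs"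
(arXiv:1406.6228).
-/

namespace IntervalObstruction

variable {V : Type*}

/-- An interval representation of a simple graph `G`: each vertex gets a nonempty
closed bounded interval `[l v, r v]`, and distinct vertices are adjacent iff their
intervals intersect. -/
structure IntRep (V : Type*) (G : SimpleGraph V) where
  l : V → ℝ
  r : V → ℝ
  hle : ∀ v, l v ≤ r v
  adj_iff : ∀ u v : V, u ≠ v →
    (G.Adj u v ↔ (Set.Icc (l u) (r u) ∩ Set.Icc (l v) (r v)).Nonempty)

/-- A partial representation: a set of pre-drawn vertices together with their
pre-drawn closed intervals. -/
structure PartialRep (V : Type*) where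
  dom : Set V
  l : V → ℝ
  r : V → ℝ
  hle : ∀ v ∈ dom, l v ≤ r v

/-- `R` extends the partial representation `R'`. -/
def IntRep.Extends {G : SimpleGraph V} (R : IntRep V G) (R' : PartialRep V) : Prop :=
  ∀ v ∈ R'.dom, R.l v = R'.l v ∧ R.r v = R'.r v

/-- A maximal clique of `G`. -/
def IsMaxClique (G : SimpleGraph V) (a : Set V) : Prop :=
  G.IsClique a ∧ ∀ b : Set V, G.IsClique b → a ⊆ b → b = a

/-- The set of possible positions of the clique-point of `a` in the
representation `R` (the common intersection of the intervals of `a`). -/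
def IntRep.region {G : SimpleGraph V} (R : IntRep V G) (a : Set V) : Set ℝ :=
  ⋂ v ∈ a, Set.Icc (R.l v) (R.r v)

/-- In the representation `R`, the clique-point of `a` lies strictly to the left
of the clique-point of `b`. -/
def Before {G : SimpleGraph V} (R : IntRep V G) (a b : Set V) : Prop :=
  ∀ p ∈ R.region a, ∀ q ∈ R.region b, p < q

/-- `a ⊲ b` : every representation extending `R'` places the clique-point of `a`
strictly to the left of the clique-point of `b`. -/
def ForcedLeft (G : SimpleGraph V) (R' : PartialRep V) (a b : Set V) : Prop :=
  ∀ R : IntRep V G, R.Extends R' → Before R a b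

/-- `I_a` : the set of positions where the clique-point of `a` can be placed
in some extension of `R'`. -/
def ISet (G : SimpleGraph V) (R' : PartialRep V) (a : Set V) : Set ℝ :=
  {p | ∃ R : IntRep V G, R.Extends R' ∧ p ∈ R.region a}

/-- `↷(a)` : the right endpooint of `I_a`. -/
noncomputable def rightEnd (G : SimpleGraph V) (R' : PartialRep V) (a : Set V) : ℝ :=
  sSup (ISet G R' a)

/-- `A` lies entirely to the left of `B`. -/
def SetLeftOf (A B : Set ℝ) : Prop := ∀ p ∈ A, ∀ q ∈ B, p < q

/-- `P(a)` : the pre-drawn vertices of the clique `a`. -/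
def Pre (R' : PartialRep V) (a : Set V) : Set V := a ∩ R'.dom

/-- The pre-drawn intervals of `u` and `v` are disjoint. -/
def DisjPre (R' : PartialRep V) (u v : V) : Prop :=
  R'.r u < R'.l v ∨ R'.r v < R'.l u

/-- The pre-drawn interval of `y` lies entirely between those of `x` and `z`
(in one of the two possible orientations). -/
def StrictBetween (R' : PartialRep V) (x y z : V) : Prop :=
  (R'.r x < R'.l y ∧ R'.r y < R'.l z) ∨ (R'.r z < R'.l y ∧ R'.r y < R'.l x)

/-- The pre-drawn intervals of `u` and `v` single overlap: they intersect and
neither contains the other. -/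
def SingleOverlap (R' : PartialRep V) (u v : V) : Prop :=
  (R'.l u < R'.l v ∧ R'.l v ≤ R'.r u ∧ R'.r u < R'.r v) ∨
  (R'.l v < R'.l u ∧ R'.l u ≤ R'.r v ∧ R'.r v < R'.r u)

/-- Abstraction of a Q-node of the MPQ-tree of `G`: the maximal cliques of the
subtree `T[Q]` are distributed into `n ≥ 3` ordered children subtrees (recorded
by `idx`), and in every representation of `G` the cliques appear either in the
order of the children or in the reversed order. `verts` is the vertex set of
`G[Q]`. -/
structure QNode (V : Type*) (G : SimpleGraph V) where
  n : ℕ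
  hn : 3 ≤ n
  verts : Set V
  cliques : Set (Set V)
  maximal : ∀ a ∈ cliques, IsMaxClique G a
  sub : ∀ a ∈ cliques, a ⊆ verts
  idx : Set V → Fin n
  twoOrders : ∀ R : IntRep V G,
    (∀ a ∈ cliques, ∀ b ∈ cliques, idx a < idx b → Before R a b) ∨
    (∀ a ∈ cliques, ∀ b ∈ cliques, idx a < idx b → Before R b a)

/-- The Q-node is obstructed: neither the order of its children nor its reversal
is compatible with `⊲`. -/
def QNode.Obstructed {G : SimpleGraph V} (Q : QNode V G) (R' : PartialRep V) : Prop :=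
  (∃ a ∈ Q.cliques, ∃ b ∈ Q.cliques, Q.idx a < Q.idx b ∧ ForcedLeft G R' a b) ∧
  (∃ a ∈ Q.cliques, ∃ b ∈ Q.cliques, Q.idx a < Q.idx b ∧ ForcedLeft G R' b a)

/-- A (finite) set `S` of maximal cliques of the Q-node creates an obstruction:
already the `⊲`-relations among the cliques of `S` are incompatible with both
admissible orderings of the Q-node. -/
def QNode.CreatesObstruction {G : SimpleGraph V} (Q : QNode V G) (R' : PartialRep V)
    (S : Finset (Set V)) : Prop :=
  ↑S ⊆ Q.cliques ∧
  (∃ a ∈ S, ∃ b ∈ S, Q.idx a < Q.idx b ∧ ForcedLeft G R' a b) ∧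
  (∃ a ∈ S, ∃ b ∈ S, Q.idx a < Q.idx b ∧ ForcedLeft G R' b a)

/-- The Q-node is obstructed by the three maximal cliques `a`, `b`, `c`. -/
def QNode.ObstructedBy {G : SimpleGraph V} (Q : QNode V G) (R' : PartialRep V)
    (a b c : Set V) : Prop :=
  a ∈ Q.cliques ∧ b ∈ Q.cliques ∧ c ∈ Q.cliques ∧
  (∃ p ∈ ({a, b, c} : Set (Set V)), ∃ q ∈ ({a, b, c} : Set (Set V)),
      Q.idx p < Q.idx q ∧ ForcedLeft G R' p q) ∧
  (∃ p ∈ ({a, b, c} : Set (Set V)), ∃ q ∈ ({a, b, c} : Set (Set V)),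
      Q.idx p < Q.idx q ∧ ForcedLeft G R' q p)

/-- The graph-theoretic core of a `k`-FAT obstruction with distinguished triple
`(x_k, y_k, z_k)` and vertex set `S`, defined inductively.  The base case is the
`1`-FAT configuration: a path from `x₁` to `z₁` whose inner vertices avoid the
neighbourhood of `y₁`.  The inductive step adds `x_{k+1}`, `t_{k+1}` and a path
`P_{k+1}` from `x_{k+1}` to `t_{k+1}` to a `k`-FAT core on
`(x_k, y_k, z_k) = (x', z_{k+1}, y_{k+1})`, where `t_{k+1}` is adjacent to the
whole previous configuration except `x'`. -/
inductive KFATCore (G : SimpleGraph V) : ℕ → V → V → V → Set V → Prop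
  | base (x y z : V) (p : G.Walk x z)
      (hxy : ¬ G.Adj x y) (hyz : ¬ G.Adj y z) (hxz : ¬ G.Adj x z)
      (hxy' : x ≠ y) (hzy' : z ≠ y) (hxz' : x ≠ z)
      (hp : ∀ w ∈ p.support, w ≠ x → w ≠ z → ¬ G.Adj y w ∧ w ≠ y) :
      KFATCore G 1 x y z (insert y {w | w ∈ p.support})
  | step (k : ℕ) (x y z t x' : V) (S : Set V) (p : G.Walk x t)
      (prev : KFATCore G k x' z y S)
      (hx'S : x' ∈ S)
      (ht : ∀ w ∈ S, w ≠ x' → G.Adj t w)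
      (htx' : ¬ G.Adj t x')
      (hxy : ¬ G.Adj x y) (hxz : ¬ G.Adj x z)
      (hxy' : x ≠ y) (hxz' : x ≠ z)
      (hp : ∀ w ∈ p.support, w ≠ t → (∀ s ∈ S, ¬ G.Adj w s) ∧ w ∉ S) :
      KFATCore G (k + 1) x y z (S ∪ {w | w ∈ p.support})

/-- A `1`-FAT obstruction with the distinguished pre-drawn triple `(x, y, z)`. -/
def ContainsOneFATAt (G : SimpleGraph V) (R' : PartialRep V) (x y z : V) : Prop :=
  x ∈ R'.dom ∧ y ∈ R'.dom ∧ z ∈ R'.dom ∧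
  ¬ G.Adj x y ∧ ¬ G.Adj y z ∧ ¬ G.Adj x z ∧ x ≠ y ∧ y ≠ z ∧ x ≠ z ∧
  DisjPre R' x y ∧ DisjPre R' y z ∧ DisjPre R' x z ∧ StrictBetween R' x y z ∧
  ∃ p : G.Walk x z, ∀ w ∈ p.support, w ≠ x → w ≠ z → ¬ G.Adj y w ∧ w ≠ y

/-- `G` and `R'` contain an SE obstruction: two pre-drawn single-overlapping
intervals `x`, `z` together with a path from the private left side of `x` to the
private right side of `z` avoiding both neighbourhoods. -/
def ContainsSE (G : SimpleGraph V) (R' : PartialRep V) : Prop :=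
  ∃ x z u v : V, x ∈ R'.dom ∧ z ∈ R'.dom ∧ G.Adj x z ∧
    R'.l x < R'.l z ∧ R'.l z ≤ R'.r x ∧ R'.r x < R'.r z ∧
    G.Adj u x ∧ ¬ G.Adj u z ∧ G.Adj v z ∧ ¬ G.Adj v x ∧
    ∃ p : G.Walk u v, ∀ w ∈ p.support, w ≠ u → w ≠ v →
      ¬ G.Adj w x ∧ ¬ G.Adj w z ∧ w ≠ x ∧ w ≠ z

/-- `G` and `R'` contain a `k`-FAT obstruction. -/
def ContainsKFAT (G : SimpleGraph V) (R' : PartialRep V) (k : ℕ) : Prop :=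
  ∃ x y z S, KFATCore G k x y z S ∧
    x ∈ R'.dom ∧ y ∈ R'.dom ∧ z ∈ R'.dom ∧
    DisjPre R' x y ∧ DisjPre R' y z ∧ DisjPre R' x z ∧ StrictBetween R' x y z

/-- `G` and `R'` contain a `k`-BI obstruction: a `k`-FAT core whose middle vertex
`y` is not pre-drawn but is forced between `x` and `z` by a pre-drawn common
neighbour `u` stretching from `x` to `z`. -/
def ContainsKBI (G : SimpleGraph V) (R' : PartialRep V) (k : ℕ) : Prop :=
  ∃ x y z S u, KFATCore G k x y z S ∧
    x ∈ R'.dom ∧ z ∈ R'.dom ∧ u ∈ R'.dom ∧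
    G.Adj u y ∧ ¬ G.Adj x y ∧ ¬ G.Adj z y ∧
    R'.r x < R'.l z ∧ R'.l x ≤ R'.l u ∧ R'.r u ≤ R'.r z

/-- `G` and `R'` contain a `k`-FB obstruction. -/
def ContainsKFB (G : SimpleGraph V) (R' : PartialRep V) (k : ℕ) : Prop :=
  ∃ x y z S u v, KFATCore G k x y z S ∧
    x ∈ R'.dom ∧ z ∈ R'.dom ∧ u ∈ R'.dom ∧ v ∈ R'.dom ∧
    G.Adj u y ∧ G.Adj v y ∧ G.Adj v z ∧ ¬ G.Adj x y ∧ ¬ G.Adj z y ∧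
    R'.r x < R'.l z ∧ R'.l x ≤ R'.l u ∧ R'.r u ≤ R'.r z ∧ R'.r z < R'.r v

/-- `G` and `R'` contain a `k`-EFB obstruction. -/
def ContainsKEFB (G : SimpleGraph V) (R' : PartialRep V) (k : ℕ) : Prop :=
  ∃ x y z S u v, KFATCore G k x y z S ∧
    x ∈ R'.dom ∧ z ∈ R'.dom ∧ u ∈ R'.dom ∧ v ∈ R'.dom ∧
    G.Adj u y ∧ G.Adj v y ∧ G.Adj u x ∧ G.Adj v z ∧ ¬ G.Adj x y ∧ ¬ G.Adj z y ∧
    R'.r x < R'.l z ∧ R'.l u < R'.l x ∧ R'.r z < R'.r v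

/-- `G` and `R'` contain a `k`-FS obstruction. -/
def ContainsKFS (G : SimpleGraph V) (R' : PartialRep V) (k : ℕ) : Prop :=
  ∃ x y z S u, KFATCore G k x y z S ∧
    x ∈ R'.dom ∧ y ∈ R'.dom ∧ u ∈ R'.dom ∧
    G.Adj u z ∧ ¬ G.Adj y z ∧ ¬ G.Adj x y ∧
    R'.r x < R'.l y ∧ R'.l y ≤ R'.l u ∧ R'.l u ≤ R'.r y ∧ R'.r y < R'.r u

/-- `G` and `R'` contain a `k`-EFS obstruction. -/
def ContainsKEFS (G : SimpleGraph V) (R' : PartialRep V) (k : ℕ) : Prop :=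
  ∃ x y z S u v, KFATCore G k x y z S ∧
    x ∈ R'.dom ∧ y ∈ R'.dom ∧ u ∈ R'.dom ∧ v ∈ R'.dom ∧
    G.Adj u z ∧ G.Adj v y ∧ G.Adj v z ∧ ¬ G.Adj y z ∧ ¬ G.Adj x y ∧
    R'.r x < R'.l y ∧ R'.l v < R'.l y ∧ R'.l y ≤ R'.l u ∧ R'.l u ≤ R'.r y

/-- `G` and `R'` contain a `k`-FDS obstruction. -/
def ContainsKFDS (G : SimpleGraph V) (R' : PartialRep V) (k : ℕ) : Prop :=
  ∃ x y z S u v, KFATCore G k x y z S ∧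
    y ∈ R'.dom ∧ u ∈ R'.dom ∧ v ∈ R'.dom ∧
    G.Adj u x ∧ G.Adj v y ∧ G.Adj v z ∧ ¬ G.Adj y z ∧ ¬ G.Adj x y ∧
    R'.r u < R'.l y ∧ R'.l y ≤ R'.l v

/-- `G` and `R'` contain a `k`-EFDS obstruction. -/
def ContainsKEFDS (G : SimpleGraph V) (R' : PartialRep V) (k : ℕ) : Prop :=
  ∃ x y z S u v w, KFATCore G k x y z S ∧
    y ∈ R'.dom ∧ u ∈ R'.dom ∧ v ∈ R'.dom ∧ w ∈ R'.dom ∧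
    G.Adj u x ∧ G.Adj v y ∧ G.Adj v z ∧ G.Adj w z ∧ ¬ G.Adj y z ∧ ¬ G.Adj x y ∧
    R'.r u < R'.l y ∧ R'.l v < R'.l y ∧ R'.r v < R'.r w

/-- `G` and `R'` contain a `k`-FNS obstruction. -/
def ContainsKFNS (G : SimpleGraph V) (R' : PartialRep V) (k : ℕ) : Prop :=
  ∃ x y z S u v w, KFATCore G k x y z S ∧
    y ∈ R'.dom ∧ u ∈ R'.dom ∧ v ∈ R'.dom ∧ w ∈ R'.dom ∧
    G.Adj u x ∧ G.Adj v y ∧ G.Adj v z ∧ G.Adj w z ∧ ¬ G.Adj y z ∧ ¬ G.Adj x y ∧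
    R'.r u < R'.l y ∧ R'.l w ≤ R'.r v ∧ R'.l v ≤ R'.r w

/-- `G` and `R'` contain a `(k, ℓ)`-CE obstruction: two symmetric FAT cores on
the triples `(x, y, z)` and `(y, x, z)` whose free vertices `x`, `y` are tied to
the pre-drawn vertex `z` via a common pre-drawn neighbour `u` single overlapping
`z`. -/
def ContainsKLCE (G : SimpleGraph V) (R' : PartialRep V) (k l : ℕ) : Prop :=
  ∃ x y z u S S', KFATCore G k x y z S ∧ KFATCore G l y x z S' ∧
    z ∈ R'.dom ∧ u ∈ R'.dom ∧
    G.Adj u x ∧ G.Adj u y ∧ G.Adj u z ∧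
    ¬ G.Adj x y ∧ ¬ G.Adj y z ∧ ¬ G.Adj x z ∧
    SingleOverlap R' u z

/-- Flipping a partial representation (the horizontal mirror image). -/
def PartialRep.flip (R' : PartialRep V) : PartialRep V where
  dom := R'.dom
  l := fun v => - R'.r v
  r := fun v => - R'.l v
  hle := fun v hv => neg_le_neg (R'.hle v hv)

-- Swapping the positions of the pre-drawn intervals of `x` and `y`.
open Classical in
noncomputable def PartialRep.swap (R' : PartialRep V) (x y : V)
    (hx : x ∈ R'.dom) (hy : y ∈ R'.dom) : PartialRep V where
  dom := R'.dom
  l := fun v => if v = x then R'.l y else if v = y then R'.l x else R'.l v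
  r := fun v => if v = x then R'.r y else if v = y then R'.r x else R'.r v
  hle := by
    intro v hv
    by_cases h1 : v = x
    · simpa [h1] using R'.hle y hy
    · by_cases h2 : v = y
      · have h3 : y ≠ x := fun hyx => h1 (h2.trans hyx)
        simpa [h1, h2, h3] using R'.hle x hx
      · simpa [h1, h2] using R'.hle v hv

/-- Reversing a Q-node. -/
def QNode.reverse {G : SimpleGraph V} (Q : QNode V G) : QNode V G where
  n := Q.n
  hn := Q.hn
  verts := Q.verts
  cliques := Q.cliques
  maximal := Q.maximal
  sub := Q.sub
  idx := fun a => (Q.idx a).rev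
  twoOrders := by
    intro R
    rcases Q.twoOrders R with h | h
    · right
      intro a ha b hb hlt
      exact h b hb a ha (Fin.rev_lt_rev.mp hlt)
    · left
      intro a ha b hb hlt
      exact h b hb a ha (Fin.rev_lt_rev.mp hlt)

end IntervalObstruction

/-!
Swapping the pre-drawn intervals of `x` and `y` puts `x` between `y` and `z`, so a `1`-FAT
obstruction on `(y, x, z)` only needs a path `y t z` whose middle vertex `t` misses `N[x]`.
For `k ≥ 3` the apex `t_{k-1}` of the second-to-last step is such a vertex: it sees the whole
`(k-2)`-FAT core on `(x_{k-2}, y, z)` except `x_{k-2}`, and it lies in the `(k-1)`-FAT core,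
which the path `P_k` starting at `x` avoids together with its neighbourhood. For `k = 2` the
same argument applies to `t_2` unless `x` is adjacent to it.
-/

namespace IntervalObstruction

section

variable {V : Type*}

namespace PartialRep

variable [DecidableEq V] (R' : PartialRep V) {x y : V} (hx : x ∈ R'.dom) (hy : y ∈ R'.dom)

theorem swap_l (v : V) : (R'.swap x y hx hy).l v = R'.l (Equiv.swap x y v) := by
  simp only [swap, Equiv.swap_apply_def]
  split_ifs <;> simp_all

theorem swap_r (v : V) : (R'.swap x y hx hy).r v = R'.r (Equiv.swap x y v) := by
  simp only [swap, Equiv.swap_apply_def]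
  split_ifs <;> simp_all

end PartialRep

section Swap

variable [DecidableEq V] {R' : PartialRep V} {x y : V} (hx : x ∈ R'.dom) (hy : y ∈ R'.dom)

theorem disjPre_swap_iff (u v : V) :
    DisjPre (R'.swap x y hx hy) u v ↔ DisjPre R' (Equiv.swap x y u) (Equiv.swap x y v) := by
  simp only [DisjPre, PartialRep.swap_l, PartialRep.swap_r]

theorem strictBetween_swap_iff (u v w : V) :
    StrictBetween (R'.swap x y hx hy) u v w ↔
      StrictBetween R' (Equiv.swap x y u) (Equiv.swap x y v) (Equiv.swap x y w) := by
  simp only [StrictBetween, PartialRep.swap_l, PartialRep.swap_r]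

end Swap

theorem containsOneFATAt_of_adj_of_adj {G : SimpleGraph V} {R' : PartialRep V} {x y z t : V}
    (hx : x ∈ R'.dom) (hy : y ∈ R'.dom) (hz : z ∈ R'.dom)
    (hd1 : DisjPre R' x y) (hd2 : DisjPre R' y z) (hd3 : DisjPre R' x z)
    (hbtw : StrictBetween R' x y z)
    (hxy : ¬ G.Adj x y) (hyz : ¬ G.Adj y z) (hxz : ¬ G.Adj x z)
    (hxy' : x ≠ y) (hyz' : y ≠ z) (hxz' : x ≠ z)
    (hxt : G.Adj x t) (htz : G.Adj t z) (hyt : ¬ G.Adj y t) (hty : t ≠ y) :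
    ContainsOneFATAt G R' x y z := by
  refine ⟨hx, hy, hz, hxy, hyz, hxz, hxy', hyz', hxz', hd1, hd2, hd3, hbtw,
    .cons hxt (.cons htz .nil), ?_⟩
  intro w hw hwx hwz
  simp only [SimpleGraph.Walk.support_cons, SimpleGraph.Walk.support_nil, List.mem_cons,
    List.not_mem_nil, or_false] at hw
  obtain rfl | rfl | rfl := hw
  exacts [absurd rfl hwx, ⟨hyt, hty⟩, absurd rfl hwz]

theorem containsOneFATAt_swap_of_adj {G : SimpleGraph V} {R' : PartialRep V} {x y z t : V}
    (hx : x ∈ R'.dom) (hy : y ∈ R'.dom) (hz : z ∈ R'.dom)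
    (hd1 : DisjPre R' x y) (hd2 : DisjPre R' y z) (hd3 : DisjPre R' x z)
    (hbtw : StrictBetween R' x y z)
    (hxy : ¬ G.Adj x y) (hyz : ¬ G.Adj y z) (hxz : ¬ G.Adj x z)
    (hxy' : x ≠ y) (hyz' : y ≠ z) (hxz' : x ≠ z)
    (hty : G.Adj t y) (htz : G.Adj t z) (hxt : ¬ G.Adj x t) (htx : t ≠ x) :
    ContainsOneFATAt G (R'.swap x y hx hy) y x z := by
  classical
  have hzx : Equiv.swap x y z = z := Equiv.swap_apply_of_ne_of_ne hxz'.symm hyz'.symm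
  refine containsOneFATAt_of_adj_of_adj hy hx hz ?_ ?_ ?_ ?_ (fun h => hxy h.symm) hxz hyz
    hxy'.symm hxz' hyz' hty.symm htz hxt htx
  · rwa [disjPre_swap_iff, Equiv.swap_apply_right, Equiv.swap_apply_left]
  · rwa [disjPre_swap_iff, Equiv.swap_apply_left, hzx]
  · rwa [disjPre_swap_iff, Equiv.swap_apply_right, hzx]
  · rwa [strictBetween_swap_iff, Equiv.swap_apply_right, Equiv.swap_apply_left, hzx]

namespace KFATCore

variable {G : SimpleGraph V} {k : ℕ} {a b c : V} {S : Set V}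

theorem mid_mem_and_right_mem (h : KFATCore G k a b c S) : b ∈ S ∧ c ∈ S := by
  induction h with
  | base _ _ _ p => exact ⟨Or.inl rfl, Or.inr p.end_mem_support⟩
  | step _ _ _ _ _ _ _ _ _ _ _ _ _ _ _ _ _ ih => exact ⟨Or.inl ih.2, Or.inl ih.1⟩

theorem left_ne_mid_and_left_ne_right (h : KFATCore G k a b c S) : a ≠ b ∧ a ≠ c := by
  cases h with
  | base _ _ _ _ _ _ _ hab _ hac => exact ⟨hab, hac⟩
  | step _ _ _ _ _ _ _ _ _ _ _ _ _ _ hab hac => exact ⟨hab, hac⟩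

theorem adj_mid_and_adj_right {t : V} (h : KFATCore G k a b c S)
    (ht : ∀ w ∈ S, w ≠ a → G.Adj t w) : G.Adj t b ∧ G.Adj t c :=
  ⟨ht b h.mid_mem_and_right_mem.1 h.left_ne_mid_and_left_ne_right.1.symm,
    ht c h.mid_mem_and_right_mem.2 h.left_ne_mid_and_left_ne_right.2.symm⟩

theorem exists_adj_mid_adj_right_not_adj_left (h : KFATCore G k a b c S) (hk : 2 < k) :
    ∃ t, G.Adj t b ∧ G.Adj t c ∧ ¬ G.Adj a t ∧ t ≠ a := by
  obtain _ | ⟨_, _, _, _, t₁, _, _, p, prev, _, ht₁, _, hnab, _, _, _, hp⟩ := h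
  · omega
  have hat₁ : a ≠ t₁ := by
    rintro rfl
    exact hnab (prev.adj_mid_and_adj_right ht₁).2
  obtain ⟨ha_nadj, ha_nmem⟩ := hp a p.start_mem_support hat₁
  obtain _ | ⟨_, _, _, _, t, _, S₀, q, prev₂, _, ht, _⟩ := prev
  · omega
  have htS₁ : t ∈ S₀ ∪ {w | w ∈ q.support} := Or.inr q.end_mem_support
  obtain ⟨htb, htc⟩ := prev₂.adj_mid_and_adj_right ht
  exact ⟨t, htb, htc, ha_nadj t htS₁, fun hta => ha_nmem (hta ▸ htS₁)⟩

end KFATCore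

end

/-- **Lemma (swapping `x_k` and `y_k` in a `k`-FAT obstruction).**
Consider a `k`-FAT obstruction with distinguished pre-drawn triple `(x, y, z)`.
If the positions of the pre-drawn intervals of `x` and `y` are swapped, then
for `k > 2` the new configuration contains a `1`-FAT obstruction for
`x'₁ = y`, `y'₁ = x` and `z'₁ = z`.  Further, if `k = 2` and this does not
happen, then `x₂` is adjacent to `t₂`. -/
theorem k_fat_swap {V : Type*} {G : SimpleGraph V}
    (R' : PartialRep V) (x y z : V)
    (hx : x ∈ R'.dom) (hy : y ∈ R'.dom) (hz : z ∈ R'.dom)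
    (hd1 : DisjPre R' x y) (hd2 : DisjPre R' y z) (hd3 : DisjPre R' x z)
    (hbtw : StrictBetween R' x y z)
    (hxy : ¬ G.Adj x y) (hyz : ¬ G.Adj y z) (hxz : ¬ G.Adj x z)
    (hxy' : x ≠ y) (hyz' : y ≠ z) (hxz' : x ≠ z) :
    (∀ (k : ℕ) (S : Set V), 2 < k → KFATCore G k x y z S →
        ContainsOneFATAt G (R'.swap x y hx hy) y x z) ∧
    (∀ (x' t : V) (S₀ : Set V) (p : G.Walk x t),
        KFATCore G 1 x' z y S₀ → x' ∈ S₀ →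
        (∀ w ∈ S₀, w ≠ x' → G.Adj t w) → ¬ G.Adj t x' →
        (∀ w ∈ p.support, w ≠ t → (∀ s ∈ S₀, ¬ G.Adj w s) ∧ w ∉ S₀) →
        ¬ ContainsOneFATAt G (R'.swap x y hx hy) y x z →
        G.Adj x t) := by
  have swap_fat {t : V} :=
    containsOneFATAt_swap_of_adj (t := t) hx hy hz hd1 hd2 hd3 hbtw hxy hyz hxz hxy' hyz' hxz'
  refine ⟨fun k S hk h => ?_, fun x' t S₀ p h₁ _ ht _ _ hno => ?_⟩
  · obtain ⟨t, hty, htz, hxt, htx⟩ := h.exists_adj_mid_adj_right_not_adj_left hk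
    exact swap_fat hty htz hxt htx
  · by_contra hxt
    obtain ⟨htz, hty⟩ := h₁.adj_mid_and_adj_right ht
    exact hno (swap_fat hty htz hxt fun htx => hxy (htx ▸ hty))

end IntervalObstruction
end

section
/- Let R be an interval representation of a simple graph G and let y be a vertex of G. If P is a path in G between vertices x and z such that no vertex of P equals y or is adjacent to y, then the intervals R(x) and R(z) lie on the same side of R(y): either both entirely to the left of R(y) or both entirely to the right of R(y). -/
namespace IntervalObstruction

/-- If `P` is a path in `G` between `x` and `z` such that no vertex of `P`
equals `y` or is adjacent to `y`, then in any interval representation `R` of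
`G` the intervals `R(x)` and `R(z)` lie on the same side of `R(y)`: either
both entirely to the left of `R(y)`, or both entirely to the right. -/
theorem path_avoiding_neighborhood_same_side {V : Type*} {G : SimpleGraph V}
    (R : IntRep V G) (x y z : V) (p : G.Walk x z)
    (hp : ∀ w ∈ p.support, w ≠ y ∧ ¬ G.Adj y w) :
    (R.r x < R.l y ∧ R.r z < R.l y) ∨ (R.r y < R.l x ∧ R.r y < R.l z) := by
  -- every vertex disjoint from y lies strictly on one side of R(y)
  have side : ∀ w : V, w ≠ y → ¬ G.Adj y w → R.r w < R.l y ∨ R.r y < R.l w := by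
    intro w hwy hadj
    have h := (R.adj_iff y w (Ne.symm hwy)).not.mp hadj
    by_contra hcon
    push_neg at hcon
    obtain ⟨h1, h2⟩ := hcon
    exact h ⟨max (R.l y) (R.l w), ⟨le_max_left _ _, max_le (R.hle y) h2⟩,
      ⟨le_max_right _ _, max_le h1 (R.hle w)⟩⟩
  induction p with
  | @nil u =>
    rcases side u (hp u (by simp)).1 (hp u (by simp)).2 with h | h
    · exact Or.inl ⟨h, h⟩
    · exact Or.inr ⟨h, h⟩
  | @cons a b c hab q ih =>
    have hb : ∀ w ∈ q.support, w ≠ y ∧ ¬ G.Adj y w := by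
      intro w hw; exact hp w (by simp [hw])
    have ha := hp a (by simp)
    -- a and b intersect
    have hadj := (R.adj_iff a b (G.ne_of_adj hab)).mp hab
    obtain ⟨t, ⟨ta1, ta2⟩, tb1, tb2⟩ := hadj
    have hbside := side b (hb b q.start_mem_support).1 (hb b q.start_mem_support).2
    have haside := side a ha.1 ha.2
    rcases ih hb with ⟨hbz1, hbz2⟩ | ⟨hbz1, hbz2⟩
    · left
      refine ⟨?_, hbz2⟩
      rcases haside with h | h
      · exact h
      · exfalso
        -- contradiction: t ≤ r b < l y ≤ r y < l a ≤ t
        have : t < t := lt_of_le_of_lt tb2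
          (lt_of_lt_of_le hbz1 (le_trans (R.hle y) (le_trans h.le ta1)))
        exact lt_irrefl t this
    · right
      refine ⟨?_, hbz2⟩
      rcases haside with h | h
      · exfalso
        have : t < t := lt_of_le_of_lt ta2
          (lt_of_lt_of_le (lt_of_lt_of_le h (R.hle y)) (le_trans hbz1.le tb1))
        exact lt_irrefl t this
      · exact h

end IntervalObstruction
end

section
/- Let R be an interval representation of a simple graph G and let u, x, y, z be vertices with y distinct from and non-adjacent to both x and z, and y adjacent to u. If the left endpoint of R(x) is at most the left endpoint of R(u) and the right endpoint of R(u) is at most the right endpoint of R(z), then R(y) lies strictly between R(x) and R(z): the right endpoint of R(x) is strictly less than the left endpoint of R(y), and the right endpoint of R(y) is strictly less than the left endpoint of R(z). -/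
namespace IntervalObstruction

/-- Let `y` be distinct from and non-adjacent to both `x` and `z`, and adjacent
to `u`.  If `ℓ(R(x)) ≤ ℓ(R(u))` and `r(R(u)) ≤ r(R(z))`, then `R(y)` lies
strictly between `R(x)` and `R(z)`. -/
theorem forced_strictly_between {V : Type*} {G : SimpleGraph V}
    (R : IntRep V G) (u x y z : V)
    (hyx : y ≠ x) (hyz : y ≠ z)
    (hax : ¬ G.Adj y x) (haz : ¬ G.Adj y z) (hau : G.Adj y u)
    (h1 : R.l x ≤ R.l u) (h2 : R.r u ≤ R.r z) :
    R.r x < R.l y ∧ R.r y < R.l z := by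
  obtain ⟨p, hpy, hpu⟩ := (R.adj_iff y u (G.ne_of_adj hau)).mp hau
  have hxy := R.adj_iff y x hyx
  have hzy := R.adj_iff y z hyz
  have hdx : Set.Icc (R.l y) (R.r y) ∩ Set.Icc (R.l x) (R.r x) = ∅ := by
    by_contra h
    exact hax (hxy.mpr (Set.nonempty_iff_ne_empty.mpr h))
  have hdz : Set.Icc (R.l y) (R.r y) ∩ Set.Icc (R.l z) (R.r z) = ∅ := by
    by_contra h
    exact haz (hzy.mpr (Set.nonempty_iff_ne_empty.mpr h))
  have hly := hpy.1
  have hry := hpy.2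
  have hlu := hpu.1
  have hru := hpu.2
  constructor
  · by_contra h
    push_neg at h
    have : max (R.l x) (R.l y) ∈ Set.Icc (R.l y) (R.r y) ∩ Set.Icc (R.l x) (R.r x) :=
      ⟨⟨le_max_right _ _, max_le (h1.trans (hlu.trans hry)) (R.hle y)⟩,
       ⟨le_max_left _ _, max_le (R.hle x) h⟩⟩
    simp [hdx] at this
  · by_contra h
    push_neg at h
    have : min (R.r y) (R.r z) ∈ Set.Icc (R.l y) (R.r y) ∩ Set.Icc (R.l z) (R.r z) :=
      ⟨⟨le_min (R.hle y) ((hly.trans hru).trans h2), min_le_left _ _⟩,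
       ⟨le_min h (R.hle z), min_le_right _ _⟩⟩
    simp [hdz] at this

end IntervalObstruction
end

section
/- (Soundness of the 1-FAT obstruction) Let G be a simple graph with a partial representation R' in which three pairwise non-adjacent vertices x, y, z are pre-drawn with pairwise disjoint intervals such that R'(y) lies entirely between R'(x) and R'(z). If G contains a path from x to z all of whose inner vertices are non-adjacent to y, then no interval representation of G extends R'. -/
namespace IntervalObstruction

/-- Auxiliary: if every vertex of a walk has its interval on one side of `y`'s
interval, and the start is on the left, then the end is also on the left. -/
lemma walk_stays_left {V : Type*} {G : SimpleGraph V} (R : IntRep V G) (y : V)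
    {x z : V} (p : G.Walk x z)
    (hsep : ∀ w ∈ p.support, R.r w < R.l y ∨ R.r y < R.l w)
    (hx : R.r x < R.l y) : R.r z < R.l y := by
  induction p with
  | nil => exact hx
  | @cons a b c hadj q ih =>
    have hbmem : b ∈ (SimpleGraph.Walk.cons hadj q).support := by
      simp [SimpleGraph.Walk.support_cons]
    have hb : R.r b < R.l y := by
      rcases hsep b hbmem with h | h
      · exact h
      · exfalso
        have hne : a ≠ b := hadj.ne
        obtain ⟨t, ht1, ht2⟩ := (R.adj_iff a b hne).mp hadj
        have : t ≤ R.r a := ht1.2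
        have : t < R.l y := lt_of_le_of_lt ht1.2 hx
        have h2 : R.l b ≤ t := ht2.1
        have : R.l b < R.l y := lt_of_le_of_lt h2 ‹t < R.l y›
        have : R.r y < R.l y := lt_trans h (lt_of_le_of_lt h2 ‹t < R.l y›)
        exact absurd (R.hle y) (not_le.mpr this)
    refine ih ?_ hb
    intro w hw
    exact hsep w (by simp [SimpleGraph.Walk.support_cons, hw])

/-- Auxiliary: separation of each walk vertex from `y`. -/
lemma sep_of_walk {V : Type*} {G : SimpleGraph V} (R : IntRep V G) (y : V)
    {x z : V} (p : G.Walk x z)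
    (hp : ∀ w ∈ p.support, w ≠ x → w ≠ z → ¬ G.Adj y w ∧ w ≠ y)
    (hxL : R.r x < R.l y) (hzR : R.r y < R.l z) :
    ∀ w ∈ p.support, R.r w < R.l y ∨ R.r y < R.l w := by
  intro w hw
  by_cases hwx : w = x
  · subst hwx; exact Or.inl hxL
  by_cases hwz : w = z
  · subst hwz; exact Or.inr hzR
  obtain ⟨hadj, hne⟩ := hp w hw hwx hwz
  have hdisj := (R.adj_iff y w hne.symm).not.mp hadj
  by_contra hcon
  push_neg at hcon
  obtain ⟨h1, h2⟩ := hcon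
  exact hdisj ⟨max (R.l w) (R.l y),
    ⟨⟨le_max_right _ _, max_le h2 (R.hle y)⟩,
     ⟨le_max_left _ _, max_le (R.hle w) h1⟩⟩⟩

/-- **Soundness of the `1`-FAT obstruction.**
Let `x`, `y`, `z` be pairwise non-adjacent pre-drawn vertices with pairwise
disjoint intervals such that `R'(y)` lies entirely between `R'(x)` and
`R'(z)`.  If `G` contains a path from `x` to `z` all of whose inner vertices
are non-adjacent to `y`, then no interval representation of `G` extends
`R'`. -/
theorem one_fat_sound {V : Type*} {G : SimpleGraph V}
    (R' : PartialRep V) (x y z : V)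
    (hx : x ∈ R'.dom) (hy : y ∈ R'.dom) (hz : z ∈ R'.dom)
    (hxy : ¬ G.Adj x y) (hyz : ¬ G.Adj y z) (hxz : ¬ G.Adj x z)
    (hxy' : x ≠ y) (hyz' : y ≠ z) (hxz' : x ≠ z)
    (hd1 : DisjPre R' x y) (hd2 : DisjPre R' y z) (hd3 : DisjPre R' x z)
    (hbtw : StrictBetween R' x y z)
    (p : G.Walk x z)
    (hp : ∀ w ∈ p.support, w ≠ x → w ≠ z → ¬ G.Adj y w ∧ w ≠ y) :
    ¬ ∃ R : IntRep V G, R.Extends R' := by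
  rintro ⟨R, hR⟩
  obtain ⟨hlx, hrx⟩ := hR x hx
  obtain ⟨hly, hry⟩ := hR y hy
  obtain ⟨hlz, hrz⟩ := hR z hz
  rcases hbtw with ⟨h1, h2⟩ | ⟨h1, h2⟩
  · -- x left of y left of z
    have hxL : R.r x < R.l y := by rw [hrx, hly]; exact h1
    have hzR : R.r y < R.l z := by rw [hry, hlz]; exact h2
    have := walk_stays_left R y p (sep_of_walk R y p hp hxL hzR) hxL
    have : R.r y < R.l y :=
      lt_trans hzR (lt_of_le_of_lt (R.hle z) ‹R.r z < R.l y›)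
    exact absurd (R.hle y) (not_le.mpr this)
  · -- z left of y left of x : use the reversed walk
    have hzL : R.r z < R.l y := by rw [hrz, hly]; exact h1
    have hxR : R.r y < R.l x := by rw [hry, hlx]; exact h2
    have hp' : ∀ w ∈ p.reverse.support, w ≠ z → w ≠ x → ¬ G.Adj y w ∧ w ≠ y := by
      intro w hw hwz hwx
      exact hp w (by simpa using hw) hwx hwz
    have := walk_stays_left R y p.reverse (sep_of_walk R y p.reverse hp' hzL hxR) hzL
    have : R.r y < R.l y :=
      lt_trans hxR (lt_of_le_of_lt (R.hle x) ‹R.r x < R.l y›)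
    exact absurd (R.hle y) (not_le.mpr this)

end IntervalObstruction
end

section
/- Let R be an interval representation of a simple graph G, let x and y be non-adjacent vertices with R(x) entirely to the left of R(y), and let C be the connected component containing x of the graph obtained from G by deleting the closed neighborhood N[y] of y. Then for every vertex v ∈ C, the interval R(v) lies entirely to the left of R(y). -/
namespace IntervalObstruction

/-- Let `x` and `y` be non-adjacent with `R(x)` entirely to the left of `R(y)`,
and let `C` be the connected component of `x` in the graph obtained from `G`
by deleting the closed neighbourhood `N[y]`.  Then the interval of every vertex
of `C` lies entirely to the left of `R(y)`. -/
theorem component_entirely_left {V : Type*} {G : SimpleGraph V}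
    (R : IntRep V G) (x y : V)
    (hxy : x ≠ y) (hna : ¬ G.Adj y x)
    (hleft : R.r x < R.l y) :
    ∀ (v : V) (hv : v ∈ {w : V | w ≠ y ∧ ¬ G.Adj y w}),
      (G.induce {w : V | w ≠ y ∧ ¬ G.Adj y w}).Reachable
        ⟨x, hxy, hna⟩ ⟨v, hv⟩ →
      R.r v < R.l y := by
  intro v hv hr
  obtain ⟨p⟩ := hr
  suffices H : ∀ (a b : {w : V | w ≠ y ∧ ¬ G.Adj y w})
      (p : (G.induce {w : V | w ≠ y ∧ ¬ G.Adj y w}).Walk a b),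
      R.r a.1 < R.l y → R.r b.1 < R.l y from H _ _ p hleft
  intro a b p
  induction p with
  | nil => exact fun h => h
  | @cons a b c h q ih =>
    intro ha
    apply ih
    -- h : G.Adj ↑a ↑b
    have hadj : G.Adj a.1 b.1 := h
    have hne : a.1 ≠ b.1 := G.ne_of_adj hadj
    obtain ⟨pt, hpta, hptb⟩ := (R.adj_iff a.1 b.1 hne).mp hadj
    have hbney : y ≠ b.1 := fun hh => b.2.1 hh.symm
    have hbna : ¬ G.Adj y b.1 := b.2.2
    have hdisj : ¬ (Set.Icc (R.l y) (R.r y) ∩ Set.Icc (R.l b.1) (R.r b.1)).Nonempty := by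
      intro hn
      exact hbna ((R.adj_iff y b.1 hbney).mpr hn)
    by_contra hc
    push_neg at hc
    apply hdisj
    refine ⟨R.l y, ⟨le_refl _, R.hle y⟩, ?_, hc⟩
    calc R.l b.1 ≤ pt := hptb.1
      _ ≤ R.r a.1 := hpta.2
      _ ≤ R.l y := le_of_lt ha

end IntervalObstruction
end
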